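/- arXiv:1106.6224 — 2 statements merged into one kernel-verified Lean document; each statement's English description precedes it below -/
import Mathlib

section
/- Kronecker RIP: if matrices Φ_d, d = 1,...,D, each satisfy the (K,δ_d)-RIP, then the Kronecker product Φ₁ ⊗ Φ₂ ⊗ ... ⊗ Φ_D satisfies the (K,δ)-RIP with δ = ∏_{d=1}^D (1+δ_d) − 1. (It suffices to prove the case D = 2.) -/
open Matrix Finset Kronecker

/-- A vector is `K`-sparse if it has at most `K` nonzero entries. -/
def KSparse {ι : Type*} [Fintype ι] (K : ℕ) (x : ι → ℝ) : Prop :=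
  (Finset.univ.filter fun i => x i ≠ 0).card ≤ K

/-- The `(K, δ)`-restricted isometry property. -/
def RIP {m n : Type*} [Fintype m] [Fintype n] (Φ : Matrix m n ℝ)
    (K : ℕ) (δ : ℝ) : Prop :=
  ∀ x : n → ℝ, KSparse K x →
    (1 - δ) * ∑ i, x i ^ 2 ≤ ∑ k, Φ.mulVec x k ^ 2 ∧
    ∑ k, Φ.mulVec x k ^ 2 ≤ (1 + δ) * ∑ i, x i ^ 2

/-!
Reshape `x` into the matrix `X` whose rows are its blocks `x (j, ·)`; then `(A ⊗ₖ B) *ᵥ x` lists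
the entries of `A * X * Bᵀ`. The rows of `X` and the columns of `X * Bᵀ` are again `K`-sparse,
so the RIP of `B`, applied row by row, puts the squared Frobenius norm of `X * Bᵀ` within the
factors `1 ± δ₂` of `‖x‖²`, and the RIP of `A`, applied column by column, puts `‖(A ⊗ₖ B) x‖²`
within `1 ± δ₁` of that. The two distortions compose to `(1 + δ₁) (1 + δ₂) - 1`; this needs
`δ₁, δ₂ ≥ 0`, which holds as soon as some nonzero vector is `K`-sparse.
-/

/-- `RIP Φ K δ` says exactly `IsometryBound δ (∑ i, x i ^ 2) (∑ k, (Φ *ᵥ x) k ^ 2)` for all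
`K`-sparse `x`. -/
def IsometryBound (δ a b : ℝ) : Prop :=
  (1 - δ) * a ≤ b ∧ b ≤ (1 + δ) * a

theorem IsometryBound.sum {ι : Type*} {s : Finset ι} {δ : ℝ} {a b : ι → ℝ}
    (h : ∀ t ∈ s, IsometryBound δ (a t) (b t)) :
    IsometryBound δ (∑ t ∈ s, a t) (∑ t ∈ s, b t) := by
  rw [IsometryBound, mul_sum, mul_sum]
  exact ⟨sum_le_sum fun t ht => (h t ht).1, sum_le_sum fun t ht => (h t ht).2⟩

theorem IsometryBound.trans {δ₁ δ₂ a b c : ℝ} (hδ₁ : 0 ≤ δ₁) (hδ₂ : 0 ≤ δ₂) (ha : 0 ≤ a)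
    (hab : IsometryBound δ₂ a b) (hbc : IsometryBound δ₁ b c) :
    IsometryBound ((1 + δ₁) * (1 + δ₂) - 1) a c := by
  obtain ⟨hab₁, hab₂⟩ := hab
  obtain ⟨hbc₁, hbc₂⟩ := hbc
  constructor
  · rcases le_or_gt δ₁ 1 with h | h
    · nlinarith [mul_le_mul_of_nonneg_left hab₁ (sub_nonneg.mpr h),
        mul_nonneg (mul_nonneg hδ₁ hδ₂) ha]
    · nlinarith [mul_le_mul_of_nonneg_left hab₂ (sub_nonneg.mpr h.le), mul_nonneg hδ₂ ha]
  · nlinarith [mul_le_mul_of_nonneg_left hab₂ (by linarith : 0 ≤ 1 + δ₁)]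

section KSparse

variable {ι κ : Type*} [Fintype ι] [Fintype κ] {K : ℕ} {x : ι → ℝ}

theorem KSparse.of_support_subset_image {y : κ → ℝ} {f : ι → κ} (hx : KSparse K x)
    (h : Function.support y ⊆ f '' Function.support x) : KSparse K y := by
  classical
  refine le_trans (card_le_card fun k hk => ?_) ((card_image_le (f := f)).trans hx)
  obtain ⟨i, hi, rfl⟩ := h (by simpa using hk)
  exact mem_image_of_mem f (by simpa using hi)

theorem KSparse.one_le {i : ι} (hx : KSparse K x) (hi : x i ≠ 0) : 1 ≤ K :=
  le_trans (card_pos.mpr ⟨i, by simpa using hi⟩) hx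

theorem KSparse.single [DecidableEq ι] (hK : 1 ≤ K) (i : ι) (a : ℝ) :
    KSparse K (Pi.single i a) := by
  refine le_trans (card_le_card (t := {i}) fun j hj => ?_) (by simpa using hK)
  by_contra hji
  simp_all [Pi.single_apply]

end KSparse

namespace RIP

variable {m n r : Type*} [Fintype m] [Fintype n] [Fintype r] {Φ : Matrix m n ℝ} {K : ℕ} {δ : ℝ}

theorem nonneg [DecidableEq n] (h : RIP Φ K δ) (hK : 1 ≤ K) (j : n) : 0 ≤ δ := by
  have hj := h _ (KSparse.single hK j 1)
  simp only [Pi.single_apply, ite_pow, one_pow, zero_pow two_ne_zero, sum_ite_eq', mem_univ,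
    if_true, mul_one] at hj
  linarith [hj.1.trans hj.2]

theorem sum_sq_mul_transpose (h : RIP Φ K δ) {X : Matrix r n ℝ} (hX : ∀ j, KSparse K (X j)) :
    IsometryBound δ (∑ j, ∑ l, X j l ^ 2) (∑ j, ∑ k, (X * Φᵀ) j k ^ 2) := by
  simp only [mul_apply_eq_vecMul, vecMul_transpose]
  exact IsometryBound.sum fun j _ => h _ (hX j)

theorem sum_sq_mul (h : RIP Φ K δ) {Y : Matrix n r ℝ} (hY : ∀ k, KSparse K fun j => Y j k) :
    IsometryBound δ (∑ j, ∑ k, Y j k ^ 2) (∑ i, ∑ k, (Φ * Y) i k ^ 2) := by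
  have := h.sum_sq_mul_transpose (X := Yᵀ) hY
  rwa [← transpose_mul, sum_comm (γ := r), sum_comm (γ := r)] at this

end RIP

/-- Kronecker RIP: if `A` has the `(K,δ₁)`-RIP and `B` has the `(K,δ₂)`-RIP,
then `A ⊗ B` has the `(K, (1+δ₁)(1+δ₂) − 1)`-RIP. -/
theorem kronecker_rip {M₁ N₁ M₂ N₂ K : ℕ} {δ₁ δ₂ : ℝ}
    (A : Matrix (Fin M₁) (Fin N₁) ℝ) (B : Matrix (Fin M₂) (Fin N₂) ℝ)
    (hA : RIP A K δ₁) (hB : RIP B K δ₂) :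
    RIP (A ⊗ₖ B) K ((1 + δ₁) * (1 + δ₂) - 1) := by
  intro x hx
  obtain rfl | ⟨p, hp⟩ := eq_or_ne x 0 |>.imp_right Function.ne_iff.mp
  · simp
  have hK := hx.one_le hp
  -- `X j` is the `j`-th block of `x`, so that `x = vec Xᵀ` and `(A ⊗ₖ B) *ᵥ x = vec (A * X * Bᵀ)ᵀ`.
  set X : Matrix (Fin N₁) (Fin N₂) ℝ := of fun j l => x (j, l)
  have hrows : ∀ j, KSparse K (X j) := fun j =>
    hx.of_support_subset_image (f := Prod.snd) fun l hl => ⟨(j, l), hl, rfl⟩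
  have hcols : ∀ k, KSparse K fun j => (X * Bᵀ) j k := fun k =>
    hx.of_support_subset_image (f := Prod.fst) fun j hj => by
      obtain ⟨l, hl⟩ : ∃ l, X j l ≠ 0 := by
        by_contra! h0
        simp [mul_apply, h0] at hj
      exact ⟨(j, l), hl, rfl⟩
  have hT : IsometryBound δ₂ (∑ p, x p ^ 2) (∑ j, ∑ k, (X * Bᵀ) j k ^ 2) := by
    rw [Fintype.sum_prod_type]
    exact hB.sum_sq_mul_transpose hrows
  have hS : IsometryBound δ₁ (∑ j, ∑ k, (X * Bᵀ) j k ^ 2) (∑ q, ((A ⊗ₖ B) *ᵥ x) q ^ 2) := by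
    have hx_vec : x = vec Xᵀ := rfl
    rw [hx_vec, kronecker_mulVec_vec, ← transpose_transpose B, ← transpose_mul, ← transpose_mul,
      transpose_transpose, Fintype.sum_prod_type]
    exact hA.sum_sq_mul hcols
  exact hT.trans (hA.nonneg hK p.1) (hB.nonneg hK p.2) (sum_nonneg fun _ _ => sq_nonneg _) hS
end

section
/- Block coherence dominance: for a matrix Φ partitioned into column-blocks of equal size d, the block-coherence satisfies μ_B(Φ) ≤ μ(Φ), where μ(Φ) is the standard coherence of Φ (assuming unit-norm columns). -/
open Matrix Finset

/-- The spectral norm of a square real matrix. -/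
noncomputable def specNorm {d : ℕ} (A : Matrix (Fin d) (Fin d) ℝ) : ℝ :=
  ‖Matrix.toEuclideanCLM (𝕜 := ℝ) A‖

/-- The Gram matrix `Φ[ℓ]ᵀ Φ[r]` of two column-blocks of a matrix `Φ` whose
columns are indexed by block-index pairs `(ℓ, i)`. -/
def blockGram {M m d : ℕ} (Φ : Matrix (Fin M) (Fin m × Fin d) ℝ)
    (ℓ r : Fin m) : Matrix (Fin d) (Fin d) ℝ :=
  fun i j => ∑ k, Φ k (ℓ, i) * Φ k (r, j)

/-- Block-coherence `μ_B(Φ) = max_{ℓ≠r} (1/d) ρ(Φ[ℓ]ᵀ Φ[r])`. -/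
noncomputable def blockCoherence {M m d : ℕ}
    (Φ : Matrix (Fin M) (Fin m × Fin d) ℝ) : ℝ :=
  ⨆ p : {p : Fin m × Fin m // p.1 ≠ p.2},
    (1 / (d : ℝ)) * specNorm (blockGram Φ p.1.1 p.1.2)

/-- Coherence of a matrix with unit-norm columns. -/
noncomputable def coherence {M m d : ℕ}
    (Φ : Matrix (Fin M) (Fin m × Fin d) ℝ) : ℝ :=
  ⨆ p : {p : (Fin m × Fin d) × (Fin m × Fin d) // p.1 ≠ p.2},
    |∑ k, Φ k p.1.1 * Φ k p.1.2|

/-- Spectral norm is at most `d` times a uniform entry bound. -/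
lemma specNorm_le_of_entries_le {d : ℕ} (A : Matrix (Fin d) (Fin d) ℝ) (c : ℝ) (hc : 0 ≤ c)
    (h : ∀ i j, |A i j| ≤ c) : specNorm A ≤ d * c := by
  refine ContinuousLinearMap.opNorm_le_bound _ (by positivity) fun x => ?_
  have hax : ∀ i, (toEuclideanCLM (𝕜 := ℝ) A x) i = ∑ j, A i j * x j := fun i => rfl
  have hxn : ‖x‖ ^ 2 = ∑ j, (x j) ^ 2 := by
    rw [EuclideanSpace.norm_eq, Real.sq_sqrt (by positivity)]
    simp [sq_abs]
  have hs : (∑ j, |x j|) ^ 2 ≤ (d : ℝ) * ∑ j, (x j) ^ 2 := by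
    have := sq_sum_le_card_mul_sum_sq (s := (Finset.univ : Finset (Fin d)))
      (f := fun j => |x j|)
    simpa [sq_abs] using this
  have hterm : ∀ i, (∑ j, A i j * x j) ^ 2 ≤ (c * ∑ j, |x j|) ^ 2 := by
    intro i
    have h1 : |∑ j, A i j * x j| ≤ c * ∑ j, |x j| := by
      calc |∑ j, A i j * x j| ≤ ∑ j, |A i j * x j| := Finset.abs_sum_le_sum_abs _ _
        _ ≤ ∑ j, c * |x j| := Finset.sum_le_sum fun j _ => by
              rw [abs_mul]
              exact mul_le_mul_of_nonneg_right (h i j) (abs_nonneg _)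
        _ = c * ∑ j, |x j| := by rw [Finset.mul_sum]
    calc (∑ j, A i j * x j) ^ 2 = |∑ j, A i j * x j| ^ 2 := (sq_abs _).symm
      _ ≤ (c * ∑ j, |x j|) ^ 2 :=
          pow_le_pow_left₀ (abs_nonneg _) h1 2
  have hsq : ‖toEuclideanCLM (𝕜 := ℝ) A x‖ ^ 2 ≤ ((d : ℝ) * c * ‖x‖) ^ 2 := by
    have h2 : ‖toEuclideanCLM (𝕜 := ℝ) A x‖ ^ 2 = ∑ i, (∑ j, A i j * x j) ^ 2 := by
      rw [EuclideanSpace.norm_eq, Real.sq_sqrt (by positivity)]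
      simp only [Real.norm_eq_abs, sq_abs, hax]
    rw [h2]
    calc ∑ i, (∑ j, A i j * x j) ^ 2 ≤ ∑ _i : Fin d, (c * ∑ j, |x j|) ^ 2 :=
          Finset.sum_le_sum fun i _ => hterm i
      _ = (d : ℝ) * (c * ∑ j, |x j|) ^ 2 := by
          rw [Finset.sum_const]; simp [mul_comm]
      _ = (d : ℝ) * c ^ 2 * (∑ j, |x j|) ^ 2 := by ring
      _ ≤ (d : ℝ) * c ^ 2 * ((d : ℝ) * ∑ j, (x j) ^ 2) := by
          refine mul_le_mul_of_nonneg_left hs (by positivity)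
      _ = ((d : ℝ) * c * ‖x‖) ^ 2 := by rw [← hxn]; ring
  have := Real.sqrt_le_sqrt hsq
  rwa [Real.sqrt_sq (norm_nonneg _), Real.sqrt_sq (by positivity)] at this

/-- Block coherence dominance: for a matrix with unit-norm columns partitioned
into blocks of equal size `d`, `μ_B(Φ) ≤ μ(Φ)`. -/
theorem blockCoherence_le_coherence {M m d : ℕ} (hm : 2 ≤ m) (hd : 0 < d)
    (Φ : Matrix (Fin M) (Fin m × Fin d) ℝ)
    (hnorm : ∀ c, ∑ k, Φ k c ^ 2 = 1) :
    blockCoherence Φ ≤ coherence Φ := by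
  have hbdd : BddAbove (Set.range fun p : {p : (Fin m × Fin d) × (Fin m × Fin d) // p.1 ≠ p.2} =>
      |∑ k, Φ k p.1.1 * Φ k p.1.2|) := by
    refine ⟨1, ?_⟩
    rintro y ⟨p, rfl⟩
    have hcs := sum_mul_sq_le_sq_mul_sq Finset.univ (fun k => Φ k p.1.1) (fun k => Φ k p.1.2)
    rw [hnorm, hnorm, one_mul] at hcs
    nlinarith [abs_nonneg (∑ k, Φ k p.1.1 * Φ k p.1.2),
      sq_abs (∑ k, Φ k p.1.1 * Φ k p.1.2)]
  have hentry : ∀ (ℓ r : Fin m), ℓ ≠ r → ∀ i j, |blockGram Φ ℓ r i j| ≤ coherence Φ := by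
    intro ℓ r hlr i j
    have hne : ((ℓ, i), (r, j)).1 ≠ ((ℓ, i), (r, j)).2 := by
      simp [Prod.ext_iff, hlr]
    exact le_ciSup hbdd (⟨((ℓ, i), (r, j)), hne⟩ :
      {p : (Fin m × Fin d) × (Fin m × Fin d) // p.1 ≠ p.2})
  have hμ0 : 0 ≤ coherence Φ := by
    have h01 : (⟨0, by omega⟩ : Fin m) ≠ (⟨1, by omega⟩ : Fin m) := by
      simp [Fin.ext_iff]
    exact le_trans (abs_nonneg _) (hentry _ _ h01 ⟨0, hd⟩ ⟨0, hd⟩)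
  haveI : Nonempty {p : Fin m × Fin m // p.1 ≠ p.2} :=
    ⟨⟨(⟨0, by omega⟩, ⟨1, by omega⟩), by simp [Fin.ext_iff]⟩⟩
  refine ciSup_le fun p => ?_
  have hspec := specNorm_le_of_entries_le (blockGram Φ p.1.1 p.1.2) (coherence Φ) hμ0
    (hentry _ _ p.2)
  have hd' : (0 : ℝ) < d := by exact_mod_cast hd
  calc (1 / (d : ℝ)) * specNorm (blockGram Φ p.1.1 p.1.2)
      ≤ (1 / (d : ℝ)) * ((d : ℝ) * coherence Φ) :=
        mul_le_mul_of_nonneg_left hspec (by positivity)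
    _ = coherence Φ := by field_simp
end
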